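/- Under the weighted-covering hypotheses, and assuming additionally that W/w̄_A > n/δ, the covered fraction satisfies β ≤ min{ (|D| − W/w̄_A)/(n/δ − W/w̄_A), |D|·δ/n }. (Theorem 1 of the paper.) -/
import Mathlib

/-- Theorem 1 of the paper (with the additional assumption `W / w̄_A > n / δ`):
under the weighted-covering hypotheses, the covered fraction `β` satisfies
`β ≤ min ((|D| − W/w̄_A)/(n/δ − W/w̄_A)) (|D|·δ/n)`. -/
theorem covering_fraction_upper_bound
    (n W D δ β WA wA : ℝ)
    (hn : 0 < n) (hδ : 0 < δ) (hwA : 0 < wA)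
    (hβ0 : 0 ≤ β) (hβ1 : β ≤ 1)
    (hcov : D * δ ≥ β * n)
    (hsize : D ≤ β * n / δ + WA / wA)
    (hWA : WA ≤ (1 - β) * W)
    (hextra : W / wA > n / δ) :
    β ≤ min ((D - W / wA) / (n / δ - W / wA)) (D * δ / n) := by
  have hneg : n / δ - W / wA < 0 := by linarith
  refine le_min ?_ ?_
  · rw [le_div_iff_of_neg hneg]
    have h1 : WA / wA ≤ (1 - β) * W / wA :=
      by gcongr
    have h2 : (1 - β) * W / wA = W / wA - β * (W / wA) := by ring
    have h3 : β * (n / δ - W / wA) = β * n / δ - β * (W / wA) := by ring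
    linarith [hsize]
  · rw [le_div_iff₀ hn]
    linarith
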